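/- For every h ∈ ℝ: 0 < g(h) < 1, the derivative of p^{(0)} satisfies (p^{(0)})'(h) = g(h), and the derivative of g satisfies g'(h) = 2·g(h)·(1 − g(h))/(2 − g(h)) > 0. -/

import Mathlib

open MeasureTheory Filter Real

noncomputable section

/-- `g(h) = (e^h/2)(√(e^{2h}+4) − e^h)`. -/
def gFun (h : ℝ) : ℝ := Real.exp h / 2 * (Real.sqrt (Real.exp (2*h) + 4) - Real.exp h)

/-- `p⁰(h) = −(1−g(h))/2 − (1/2)·log(1−g(h))`. -/
def p0 (h : ℝ) : ℝ := -(1 - gFun h)/2 - (1/2) * Real.log (1 - gFun h)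

/-- Variational pressure `p̃(m) = −Jm² + p⁰((2m−1)J + h)`. -/
def ptilde (h J m : ℝ) : ℝ := -J * m^2 + p0 ((2*m - 1) * J + h)

/-!
`g(h)` is the positive root of `g² = e^{2h}(1 − g)`, which forces `0 < g < 1` and says that
`g` inverts `u ↦ log u − log(1 − u)/2` on `(0, 1)`. The inverse function theorem then gives
`g' = 2g(1 − g)/(2 − g)`, and differentiating `p⁰` with the chain rule collapses to `g`.
-/

def gFunInv (u : ℝ) : ℝ := log u - log (1 - u) / 2

theorem exp_two_mul_eq_sq (h : ℝ) : exp (2*h) = exp h ^ 2 := by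
  rw [← exp_nat_mul]
  norm_num

theorem gFun_pos (h : ℝ) : 0 < gFun h := by
  have hlt : exp h < sqrt (exp (2*h) + 4) := by
    rw [lt_sqrt (exp_pos h).le, exp_two_mul_eq_sq]
    linarith
  exact mul_pos (by positivity) (sub_pos.mpr hlt)

theorem gFun_sq (h : ℝ) : gFun h ^ 2 = exp (2*h) * (1 - gFun h) := by
  have hsq : sqrt (exp (2*h) + 4) ^ 2 = exp (2*h) + 4 :=
    sq_sqrt (by positivity)
  rw [gFun, exp_two_mul_eq_sq] at *
  linear_combination (exp h ^ 2 / 4) * hsq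

theorem gFun_lt_one (h : ℝ) : gFun h < 1 := by
  have h1g : 0 < exp (2*h) * (1 - gFun h) := gFun_sq h ▸ pow_pos (gFun_pos h) 2
  linarith [pos_of_mul_pos_right h1g (exp_pos _).le]

theorem continuous_gFun : Continuous gFun := by
  unfold gFun
  fun_prop

theorem gFunInv_gFun (h : ℝ) : gFunInv (gFun h) = h := by
  have h1g : 0 < 1 - gFun h := sub_pos.mpr (gFun_lt_one h)
  have hlog : log (gFun h ^ 2) = 2 * h + log (1 - gFun h) := by
    rw [gFun_sq, log_mul (exp_pos _).ne' h1g.ne', log_exp]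
  rw [log_pow, Nat.cast_ofNat] at hlog
  rw [gFunInv]
  linarith

theorem hasDerivAt_gFunInv {u : ℝ} (hu0 : 0 < u) (hu1 : u < 1) :
    HasDerivAt gFunInv ((2 - u) / (2 * u * (1 - u))) u := by
  have h1u : 1 - u ≠ 0 := (sub_pos.mpr hu1).ne'
  have hderiv : HasDerivAt gFunInv (u⁻¹ - -1 / (1 - u) / 2) u :=
    (hasDerivAt_log hu0.ne').sub ((((hasDerivAt_id u).const_sub 1).log h1u).div_const 2)
  refine hderiv.congr_deriv ?_
  field_simp
  ring

theorem hasDerivAt_gFun (h : ℝ) :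
    HasDerivAt gFun (2 * gFun h * (1 - gFun h) / (2 - gFun h)) h := by
  have hg0 := gFun_pos h
  have hg1 := gFun_lt_one h
  have hinv := (hasDerivAt_gFunInv hg0 hg1).of_local_left_inverse continuous_gFun.continuousAt
    (div_pos (by linarith) (by positivity)).ne' (Eventually.of_forall gFunInv_gFun)
  rwa [inv_div] at hinv

theorem hasDerivAt_p0 (h : ℝ) : HasDerivAt p0 (gFun h) h := by
  have h1g : 1 - gFun h ≠ 0 := (sub_pos.mpr (gFun_lt_one h)).ne'
  have h2g : 2 - gFun h ≠ 0 := by linarith [gFun_lt_one h]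
  have hg := hasDerivAt_gFun h
  have hderiv : HasDerivAt p0 (- -(2 * gFun h * (1 - gFun h) / (2 - gFun h)) / 2 -
      1 / 2 * (-(2 * gFun h * (1 - gFun h) / (2 - gFun h)) / (1 - gFun h))) h :=
    ((hg.const_sub 1).neg.div_const 2).sub (((hg.const_sub 1).log h1g).const_mul (1 / 2))
  refine hderiv.congr_deriv ?_
  field_simp
  ring

/-- basic properties of `g`: `0 < g(h) < 1`, `(p⁰)'(h) = g(h)` and
`g'(h) = 2g(h)(1 − g(h))/(2 − g(h)) > 0`. -/
theorem gFun_properties (h : ℝ) :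
    0 < gFun h ∧ gFun h < 1 ∧ deriv p0 h = gFun h ∧
    deriv gFun h = 2 * gFun h * (1 - gFun h) / (2 - gFun h) ∧
    0 < deriv gFun h := by
  have hg0 := gFun_pos h
  have hg1 := gFun_lt_one h
  refine ⟨hg0, hg1, (hasDerivAt_p0 h).deriv, (hasDerivAt_gFun h).deriv, ?_⟩
  rw [(hasDerivAt_gFun h).deriv]
  exact div_pos (mul_pos (by positivity) (by linarith)) (by linarith)

end
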